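/- Let η ∈ ℝ with 0 < η < 1, and let u, v : ℕ → ℝ be sequences with u 0 = 1/2, v 0 = 0, and for all t, u(t+1) = u t − η·(u t + v t + 1) and v(t+1) = v t − η·(u t + v t + 1). Let e₀ = 1/2 denote the frozen embedding row from the first training phase. Then the squared prediction error for the category X = 1, namely (u t + v t − (−1))², tends to 0 as t → ∞, whereas the squared prediction error for the previously learned category X = 0, namely (e₀ + u t − 1)², tends to 9/16 as t → ∞. Hence the online-gradient-descent-trained deterministic hash embedding model forgets the representation for X = 0: its limiting excess loss on X = 0 is the constant 9/16, while an offline model trained on all samples achieves near-zero loss on both categories. -/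
import Mathlib


open Filter

/-- Catastrophic forgetting in the deterministic hash embedding example:
the squared prediction error on the new category `X = 1` tends to `0`,
while the squared prediction error on the previously learned category
`X = 0` tends to the constant `9/16`. -/
theorem ogd_forgetting
    (η : ℝ) (hη0 : 0 < η) (hη1 : η < 1)
    (u v : ℕ → ℝ) (hu0 : u 0 = 1 / 2) (hv0 : v 0 = 0)
    (hu : ∀ t, u (t + 1) = u t - η * (u t + v t + 1))
    (hv : ∀ t, v (t + 1) = v t - η * (u t + v t + 1))
    (e₀ : ℝ) (he₀ : e₀ = 1 / 2) :
    Tendsto (fun t => (u t + v t - (-1)) ^ 2) atTop (nhds 0) ∧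
      Tendsto (fun t => (e₀ + u t - 1) ^ 2) atTop (nhds (9 / 16)) := by
  have hs : ∀ t, u t + v t + 1 = (3 / 2) * (1 - 2 * η) ^ t := by
    intro t
    induction t with
    | zero => simp [hu0, hv0]; ring
    | succ n ih =>
      rw [hu n, hv n, pow_succ]
      nlinarith [ih]
  have huv : ∀ t, u t - v t = 1 / 2 := by
    intro t
    induction t with
    | zero => rw [hu0, hv0]; ring
    | succ n ih => rw [hu n, hv n]; linarith
  have hut : ∀ t, u t = (3 / 4) * (1 - 2 * η) ^ t - 1 / 4 := by
    intro t
    have h1 := hs t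
    have h2 := huv t
    linarith
  have habs : |1 - 2 * η| < 1 := by
    rw [abs_lt]; constructor <;> linarith
  have hgeo : Tendsto (fun t : ℕ => (1 - 2 * η) ^ t) atTop (nhds 0) :=
    tendsto_pow_atTop_nhds_zero_of_abs_lt_one habs
  constructor
  · have : Tendsto (fun t : ℕ => ((3 / 2) * (1 - 2 * η) ^ t) ^ 2) atTop (nhds 0) := by
      have := (hgeo.const_mul (3 / 2 : ℝ)).pow 2
      simpa using this
    refine this.congr fun t => ?_
    rw [← hs t]; ring
  · have : Tendsto (fun t : ℕ => ((3 / 4) * (1 - 2 * η) ^ t - 3 / 4) ^ 2) atTop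
      (nhds (((3 / 4) * 0 - 3 / 4) ^ 2)) := by
      exact ((hgeo.const_mul (3 / 4 : ℝ)).sub_const (3 / 4)).pow 2
    have h916 : ((3 / 4 : ℝ) * 0 - 3 / 4) ^ 2 = 9 / 16 := by norm_num
    rw [h916] at this
    refine this.congr fun t => ?_
    rw [hut t, he₀]; ring
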